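/- arXiv:1207.5713 — 7 statements merged into one kernel-verified Lean document; each statement's English description precedes it below -/
import Mathlib

section
/- Let f : [0,1]^n → [0,1] be any function obtained from the coordinate projections by pointwise application of ¬x = 1-x and x ⊕ y = min(1, x+y). Then for every point v ∈ [0,1]^n and every unit vector u ∈ ℝ^n such that v + εu ∈ [0,1]^n for all sufficiently small ε > 0, the one-sided directional derivative ∂f(v)/∂u = lim_{ε→0+} (f(v+εu) - f(v))/ε exists. -/
/-! Along any ray `ε ↦ v + ε • u`, every Łukasiewicz function agrees with an affine function of `ε`
on some interval `(0, δ)`. Projections are affine, and `1 - ·` and `+` preserve this; the minimum of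
two such germs is the one with the smaller value at `0`, or, on a tie, the one with the smaller
slope. The difference quotient of such a germ is eventually constant, equal to its slope. -/

open Filter Topology Set

noncomputable section

/-- Functions `[0,1]^n → [0,1]` generated from coordinate projections by the
Łukasiewicz operations `¬x = 1 - x` and `x ⊕ y = min 1 (x + y)`. -/
inductive Luk (n : ℕ) : ((Fin n → ℝ) → ℝ) → Prop
  | proj (i : Fin n) : Luk n (fun x => x i)
  | neg {f : (Fin n → ℝ) → ℝ} : Luk n f → Luk n (fun x => 1 - f x)
  | oplus {f g : (Fin n → ℝ) → ℝ} : Luk n f → Luk n g →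
      Luk n (fun x => min 1 (f x + g x))

/-- The unit cube `[0,1]^n`. -/
def cube (n : ℕ) : Set (Fin n → ℝ) := {x | ∀ i, x i ∈ Set.Icc (0:ℝ) 1}


/-- Euclidean dot product on `ℝ^n`. -/
def dot {n : ℕ} (u v : Fin n → ℝ) : ℝ := ∑ k, u k * v k

def EventuallyAffineFromRight (g : ℝ → ℝ) : Prop :=
  ∃ L : ℝ, ∀ᶠ ε in 𝓝[>] 0, g ε = g 0 + ε * L

namespace EventuallyAffineFromRight

variable {g h : ℝ → ℝ}

theorem const (c : ℝ) : EventuallyAffineFromRight fun _ => c :=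
  ⟨0, .of_forall fun _ => by ring⟩

theorem const_sub (hg : EventuallyAffineFromRight g) (c : ℝ) :
    EventuallyAffineFromRight fun ε => c - g ε := by
  obtain ⟨L, hL⟩ := hg
  refine ⟨-L, ?_⟩
  filter_upwards [hL] with ε hε
  rw [hε]
  ring

theorem add (hg : EventuallyAffineFromRight g) (hh : EventuallyAffineFromRight h) :
    EventuallyAffineFromRight fun ε => g ε + h ε := by
  obtain ⟨L₁, h₁⟩ := hg
  obtain ⟨L₂, h₂⟩ := hh
  refine ⟨L₁ + L₂, ?_⟩
  filter_upwards [h₁, h₂] with ε e₁ e₂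
  rw [e₁, e₂]
  ring

theorem tendsto (hg : EventuallyAffineFromRight g) : Tendsto g (𝓝[>] 0) (𝓝 (g 0)) := by
  obtain ⟨L, hL⟩ := hg
  have hline : Tendsto (fun ε : ℝ => g 0 + ε * L) (𝓝[>] 0) (𝓝 (g 0)) :=
    ((continuous_const.add (continuous_id.mul continuous_const)).tendsto' 0 _
      (by simp)).mono_left nhdsWithin_le_nhds
  exact hline.congr' (hL.mono fun _ hε => hε.symm)

theorem min_of_lt (hg : EventuallyAffineFromRight g) (hh : EventuallyAffineFromRight h)
    (hlt : g 0 < h 0) : EventuallyAffineFromRight fun ε => min (g ε) (h ε) := by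
  obtain ⟨L, hL⟩ := hg
  refine ⟨L, ?_⟩
  filter_upwards [hL, (tendsto ⟨L, hL⟩).eventually_lt hh.tendsto hlt] with ε hε hgh
  rw [min_eq_left hgh.le, min_eq_left hlt.le, hε]

theorem min (hg : EventuallyAffineFromRight g) (hh : EventuallyAffineFromRight h) :
    EventuallyAffineFromRight fun ε => min (g ε) (h ε) := by
  rcases lt_trichotomy (g 0) (h 0) with hlt | heq | hgt
  · exact hg.min_of_lt hh hlt
  · obtain ⟨L₁, h₁⟩ := hg
    obtain ⟨L₂, h₂⟩ := hh
    refine ⟨Min.min L₁ L₂, ?_⟩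
    filter_upwards [h₁, h₂, self_mem_nhdsWithin] with ε e₁ e₂ (hε : 0 < ε)
    rw [e₁, e₂, heq, min_self, min_add_add_left, mul_min_of_nonneg _ _ hε.le]
  · simpa only [min_comm] using hh.min_of_lt hg hgt

theorem tendsto_slope (hg : EventuallyAffineFromRight g) :
    ∃ L : ℝ, Tendsto (fun ε => (g ε - g 0) / ε) (𝓝[>] 0) (𝓝 L) := by
  obtain ⟨L, hL⟩ := hg
  refine ⟨L, tendsto_const_nhds.congr' ?_⟩
  filter_upwards [hL, self_mem_nhdsWithin] with ε hε (hpos : 0 < ε)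
  rw [hε, add_sub_cancel_left, mul_div_cancel_left₀ _ hpos.ne']

end EventuallyAffineFromRight

theorem Luk.eventuallyAffineFromRight_along_ray {n : ℕ} {f : (Fin n → ℝ) → ℝ} (hf : Luk n f)
    (v u : Fin n → ℝ) : EventuallyAffineFromRight fun ε => f (v + ε • u) := by
  induction hf with
  | proj i => exact ⟨u i, .of_forall fun _ => by simp⟩
  | neg _ ih => exact ih.const_sub 1
  | oplus _ _ ihf ihg => exact (EventuallyAffineFromRight.const 1).min (ihf.add ihg)

theorem luk_dirDeriv_exists_general {n : ℕ} (f : (Fin n → ℝ) → ℝ) (hf : Luk n f)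
    (v : Fin n → ℝ) (u : Fin n → ℝ) :
    ∃ L : ℝ, Filter.Tendsto (fun ε : ℝ => (f (v + ε • u) - f v) / ε)
      (nhdsWithin 0 (Set.Ioi 0)) (nhds L) := by
  simpa using (hf.eventuallyAffineFromRight_along_ray v u).tendsto_slope

/-- one-sided directional derivatives of truth functions exist. -/
theorem luk_dirDeriv_exists {n : ℕ} (f : (Fin n → ℝ) → ℝ) (hf : Luk n f)
    (v : Fin n → ℝ) (hv : v ∈ cube n) (u : Fin n → ℝ) (hu : dot u u = 1)
    (hcube : ∃ ε₀ > (0:ℝ), ∀ ε : ℝ, 0 < ε → ε ≤ ε₀ → v + ε • u ∈ cube n) :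
    ∃ L : ℝ, Filter.Tendsto (fun ε : ℝ => (f (v + ε • u) - f v) / ε)
      (nhdsWithin 0 (Set.Ioi 0)) (nhds L) :=
  luk_dirDeriv_exists_general f hf v u
end
end

section
/- Let U = (u_0, u_1, …, u_t) be a tuple in ℝ^n with u_1,…,u_t pairwise orthogonal unit vectors, and for each positive integer m define the simplex T_{U,m} = conv(u_0, u_0 + u_1/m, u_0 + u_1/m + u_2/m², …, u_0 + u_1/m + ⋯ + u_t/m^t). Then T_{U,m} ⊇ T_{U,m+1} for all m ≥ 1. -/
open Filter Topology Set

noncomputable section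

/-- Vertices of the simplex `T_{U,m}`: the partial sums `u₀ + Σ_{i<j} u_i/m^{i+1}`. -/
def vert {n t : ℕ} (u0 : Fin n → ℝ) (u : Fin t → Fin n → ℝ) (m : ℕ) (j : Fin (t+1)) :
    Fin n → ℝ :=
  u0 + ∑ i ∈ Finset.filter (fun i : Fin t => (i : ℕ) < (j : ℕ)) Finset.univ,
    ((m : ℝ) ^ ((i : ℕ) + 1))⁻¹ • u i

/-- The simplex `T_{U,m}`. -/
def Tsimp {n t : ℕ} (u0 : Fin n → ℝ) (u : Fin t → Fin n → ℝ) (m : ℕ) :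
    Set (Fin n → ℝ) :=
  convexHull ℝ (Set.range (vert u0 u m))


/-- the simplices `T_{U,m}` are nested: `T_{U,m} ⊇ T_{U,m+1}`. -/
theorem Tsimp_antitone {n t : ℕ} (u0 : Fin n → ℝ) (u : Fin t → Fin n → ℝ)
    (hunit : ∀ i, dot (u i) (u i) = 1)
    (horth : ∀ i j, i ≠ j → dot (u i) (u j) = 0) :
    ∀ m : ℕ, 1 ≤ m → Tsimp u0 u (m + 1) ⊆ Tsimp u0 u m := by
  intro m hm
  have hm0 : (0:ℝ) < (m:ℝ) := by exact_mod_cast hm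
  have hm1 : (0:ℝ) < (m:ℝ) + 1 := by linarith
  apply convexHull_min _ (convex_convexHull ℝ _)
  rintro _ ⟨j, rfl⟩
  show vert u0 u (m+1) j ∈ convexHull ℝ (Set.range (vert u0 u m))
  set r : ℝ := (m:ℝ) / ((m:ℝ) + 1) with hr
  have hr0 : 0 ≤ r := by positivity
  have hr1 : r ≤ 1 := by rw [hr, div_le_one hm1]; linarith
  set s : ℕ → ℝ := fun k => if k = 0 then 1 else if k ≤ (j:ℕ) then r ^ k else 0 with hs
  set w : Fin (t+1) → ℝ := fun k => s (k:ℕ) - s ((k:ℕ) + 1) with hw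
  have hstep : ∀ k : ℕ, s (k + 1) ≤ s k := by
    intro k
    simp only [hs, Nat.succ_ne_zero, if_false]
    split_ifs <;>
      first
        | exact pow_le_one₀ hr0 hr1
        | exact pow_le_pow_of_le_one hr0 hr1 (Nat.le_succ k)
        | positivity
        | omega
        | exact zero_le_one
  have htop : s (t + 1) = 0 := by
    have hjt : (j:ℕ) < t + 1 := j.isLt
    simp only [hs]
    rw [if_neg (by omega), if_neg (by omega)]
  have hs0 : s 0 = 1 := by simp [hs]
  have hsum : ∑ k : Fin (t+1), w k = 1 := by
    have h1 : ∑ k : Fin (t+1), w k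
        = ∑ k ∈ Finset.range (t+1), (s k - s (k + 1)) :=
      Fin.sum_univ_eq_sum_range (fun k => s k - s (k + 1)) (t+1)
    rw [h1, Finset.sum_range_sub' s, hs0, htop, sub_zero]
  have hnn : ∀ k ∈ (Finset.univ : Finset (Fin (t+1))), 0 ≤ w k :=
    fun k _ => sub_nonneg.2 (hstep (k:ℕ))
  have htail : ∀ i : Fin t,
      (∑ k : Fin (t+1), if (i:ℕ) < (k:ℕ) then w k else 0) = s ((i:ℕ) + 1) := by
    intro i
    have h1 : (∑ k : Fin (t+1), if (i:ℕ) < (k:ℕ) then w k else 0)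
        = ∑ k ∈ Finset.range (t+1), (if (i:ℕ) < k then s k - s (k + 1) else 0) :=
      Fin.sum_univ_eq_sum_range (fun k => if (i:ℕ) < k then s k - s (k + 1) else 0) (t+1)
    have h2 : (Finset.range (t+1)).filter (fun k => (i:ℕ) < k)
        = Finset.Ico ((i:ℕ) + 1) (t+1) := by
      ext k
      simp only [Finset.mem_filter, Finset.mem_range, Finset.mem_Ico]
      omega
    have hit : (i:ℕ) + 1 ≤ t + 1 := by have := i.isLt; omega
    rw [h1, ← Finset.sum_filter, h2,
      Finset.sum_Ico_eq_sub (fun k => s k - s (k + 1)) hit,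
      Finset.sum_range_sub' s, Finset.sum_range_sub' s, htop]
    ring
  have hvm : ∀ (M : ℕ) (k : Fin (t+1)) (x : Fin n),
      vert u0 u M k x
        = u0 x + ∑ i : Fin t,
            (if (i:ℕ) < (k:ℕ) then ((M:ℝ) ^ ((i:ℕ) + 1))⁻¹ * u i x else 0) := by
    intro M k x
    simp [vert, Finset.sum_apply, Finset.sum_filter, apply_ite (fun f : Fin n → ℝ => f x)]
  have heq : ∑ k : Fin (t+1), w k • vert u0 u m k = vert u0 u (m+1) j := by
    funext x
    have hL : (∑ k : Fin (t+1), w k • vert u0 u m k) x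
        = ∑ k : Fin (t+1), w k * vert u0 u m k x := by
      simp [Finset.sum_apply]
    rw [hL]
    have hexp : ∀ k : Fin (t+1), w k * vert u0 u m k x
        = w k * u0 x + ∑ i : Fin t,
            (if (i:ℕ) < (k:ℕ) then w k * (((m:ℝ) ^ ((i:ℕ) + 1))⁻¹ * u i x) else 0) := by
      intro k
      rw [hvm m k x, mul_add, Finset.mul_sum]
      congr 1
      refine Finset.sum_congr rfl fun i _ => ?_
      rw [mul_ite, mul_zero]
    rw [Finset.sum_congr rfl fun k _ => hexp k, Finset.sum_add_distrib,
      ← Finset.sum_mul, hsum, one_mul, Finset.sum_comm, hvm (m+1) j x]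
    congr 1
    refine Finset.sum_congr rfl fun i _ => ?_
    have hfac : (∑ k : Fin (t+1),
          if (i:ℕ) < (k:ℕ) then w k * (((m:ℝ) ^ ((i:ℕ) + 1))⁻¹ * u i x) else 0)
        = (∑ k : Fin (t+1), if (i:ℕ) < (k:ℕ) then w k else 0)
            * (((m:ℝ) ^ ((i:ℕ) + 1))⁻¹ * u i x) := by
      rw [Finset.sum_mul]
      exact Finset.sum_congr rfl fun k _ => by rw [ite_mul, zero_mul]
    rw [hfac, htail i]
    push_cast
    by_cases hij : (i:ℕ) < (j:ℕ)
    · rw [if_pos hij]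
      have hsv : s ((i:ℕ) + 1) = r ^ ((i:ℕ) + 1) := by
        simp only [hs]
        rw [if_neg (by omega), if_pos (by omega)]
      rw [hsv, hr, div_pow]
      have hmne : (m:ℝ) ^ ((i:ℕ) + 1) ≠ 0 := by positivity
      have hm1ne : ((m:ℝ) + 1) ^ ((i:ℕ) + 1) ≠ 0 := by positivity
      field_simp
    · rw [if_neg hij]
      have hsv : s ((i:ℕ) + 1) = 0 := by
        simp only [hs]
        rw [if_neg (by omega), if_neg (by omega)]
      rw [hsv, zero_mul]
  rw [← heq, ← Finset.centerMass_eq_of_sum_1 _ _ hsum]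
  exact Finset.centerMass_mem_convexHull _ hnn (by rw [hsum]; norm_num)
    (fun k _ => ⟨k, rfl⟩)
end
end

section
/- Let U = (u_0, u_1, …, u_t) with u_1,…,u_t pairwise orthogonal unit vectors in ℝ^n, and T_{U,m} as above. For all ε_1,…,ε_t > 0 there exists a positive integer m such that the simplex S = conv(u_0, u_0 + ε_1 u_1, u_0 + ε_1 u_1 + ε_2 u_2, …, u_0 + ε_1 u_1 + ⋯ + ε_t u_t) contains T_{U,m}. -/
open Filter Topology Set

noncomputable section

private lemma tele_aux {N : ℕ} (g : ℕ → ℝ) (i : ℕ) (hi : i < N) :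
    ∑ k ∈ Finset.filter (fun k : Fin N => (k : ℕ) ≤ i) Finset.univ,
      (g (k : ℕ) - g ((k : ℕ) + 1)) = g 0 - g (i + 1) := by
  rw [Finset.sum_filter,
    Fin.sum_univ_eq_sum_range (fun k => if k ≤ i then g k - g (k + 1) else 0) N]
  have h1 : ∀ k ∈ Finset.range N, (if k ≤ i then g k - g (k + 1) else 0) =
      if k ∈ Finset.range (i + 1) then g k - g (k + 1) else 0 := by
    intro k _; simp [Finset.mem_range, Nat.lt_succ_iff]
  rw [Finset.sum_congr rfl h1, Finset.sum_ite_mem,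
    Finset.inter_eq_right.mpr (Finset.range_subset_range.2 hi),
    Finset.sum_range_sub']


/-- any simplex `S` spanned by the partial sums with positive
coefficients `ε₁,…,ε_t` contains some `T_{U,m}`. -/
theorem Tsimp_subset_eps_simplex {n t : ℕ} (u0 : Fin n → ℝ) (u : Fin t → Fin n → ℝ)
    (hunit : ∀ i, dot (u i) (u i) = 1)
    (horth : ∀ i j, i ≠ j → dot (u i) (u j) = 0)
    (ε : Fin t → ℝ) (hε : ∀ i, 0 < ε i) :
    ∃ m : ℕ, 1 ≤ m ∧ Tsimp u0 u m ⊆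
      convexHull ℝ (Set.range (fun j : Fin (t+1) =>
        u0 + ∑ i ∈ Finset.filter (fun i : Fin t => (i : ℕ) < (j : ℕ)) Finset.univ,
          ε i • u i)) := by
  obtain ⟨m, hm⟩ := exists_nat_ge
    (1 + (∑ i : Fin t, (ε i)⁻¹) + ∑ i : Fin t, ∑ i' : Fin t, ε i / ε i')
  have hA : (0:ℝ) ≤ ∑ i : Fin t, (ε i)⁻¹ :=
    Finset.sum_nonneg fun i _ => inv_nonneg.2 (hε i).le
  have hB : (0:ℝ) ≤ ∑ i : Fin t, ∑ i' : Fin t, ε i / ε i' :=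
    Finset.sum_nonneg fun i _ => Finset.sum_nonneg fun i' _ => div_nonneg (hε i).le (hε i').le
  have hm1 : (1:ℝ) ≤ (m:ℝ) := by linarith
  have hm0 : (0:ℝ) < (m:ℝ) := lt_of_lt_of_le one_pos hm1
  have hmA : ∀ i, (ε i)⁻¹ ≤ (m:ℝ) := by
    intro i
    have h := Finset.single_le_sum (f := fun i : Fin t => (ε i)⁻¹)
      (fun i _ => inv_nonneg.2 (hε i).le) (Finset.mem_univ i)
    linarith
  have hmB : ∀ i i', ε i / ε i' ≤ (m:ℝ) := by
    intro i i'
    have h1 := Finset.single_le_sum (f := fun i'' : Fin t => ε i / ε i'')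
      (fun i'' _ => div_nonneg (hε i).le (hε i'').le) (Finset.mem_univ i')
    have h2 := Finset.single_le_sum (f := fun a : Fin t => ∑ i'' : Fin t, ε a / ε i'')
      (fun a _ => Finset.sum_nonneg fun i'' _ => div_nonneg (hε a).le (hε i'').le)
      (Finset.mem_univ i)
    linarith
  have hmε : ∀ i, 1 ≤ (m:ℝ) * ε i := by
    intro i
    have h := mul_le_mul_of_nonneg_right (hmA i) (hε i).le
    rwa [inv_mul_cancel₀ (hε i).ne'] at h
  have hmij : ∀ i i', ε i ≤ (m:ℝ) * ε i' := by
    intro i i'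
    have h := mul_le_mul_of_nonneg_right (hmB i i') (hε i').le
    rwa [div_mul_cancel₀ _ (hε i').ne'] at h
  refine ⟨m, by exact_mod_cast hm1, ?_⟩
  set p : Fin (t+1) → (Fin n → ℝ) := fun j =>
    u0 + ∑ i ∈ Finset.filter (fun i : Fin t => (i : ℕ) < (j : ℕ)) Finset.univ,
      ε i • u i with hp
  apply convexHull_min ?_ (convex_convexHull ℝ _)
  rintro x ⟨j, rfl⟩
  -- weights
  set s : ℕ → ℝ := fun i =>
    if h : i < t ∧ i < (j:ℕ) then (((m:ℝ) ^ (i+1))⁻¹) / ε ⟨i, h.1⟩ else 0 with hs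
  set g : ℕ → ℝ := fun k => if k = 0 then 1 else s (k - 1) with hg
  have hpow : ∀ k : ℕ, (0:ℝ) < (m:ℝ) ^ k := fun k => pow_pos hm0 k
  have hs_nonneg : ∀ i, 0 ≤ s i := by
    intro i
    simp only [hs]
    split
    · exact div_nonneg (inv_nonneg.2 (hpow _).le) (hε _).le
    · exact le_refl 0
  have hg_nonneg : ∀ k, 0 ≤ g k := by
    intro k
    simp only [hg]
    split
    · norm_num
    · exact hs_nonneg _
  have hs_step : ∀ i : ℕ, s (i + 1) ≤ s i := by
    intro i
    by_cases h1 : i + 1 < t ∧ i + 1 < (j:ℕ)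
    · have h0 : i < t ∧ i < (j:ℕ) := ⟨Nat.lt_of_succ_lt h1.1, Nat.lt_of_succ_lt h1.2⟩
      simp only [hs, dif_pos h1, dif_pos h0]
      rw [div_le_div_iff₀ (hε _) (hε _)]
      have key := hmij ⟨i, h0.1⟩ ⟨i+1, h1.1⟩
      have hP := hpow (i + 1)
      rw [pow_succ]
      rw [mul_inv]
      have : ((m:ℝ) ^ (i+1))⁻¹ * ((m:ℝ))⁻¹ * ε ⟨i, h0.1⟩ ≤ ((m:ℝ) ^ (i+1))⁻¹ * ε ⟨i+1, h1.1⟩ := by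
        rw [mul_assoc]
        apply mul_le_mul_of_nonneg_left _ (inv_nonneg.2 hP.le)
        rw [inv_mul_le_iff₀ hm0]
        exact key
      exact this
    · simp only [hs, dif_neg h1]
      exact hs_nonneg i
  have hg_step : ∀ k, g (k + 1) ≤ g k := by
    intro k
    match k with
    | 0 =>
      show g 1 ≤ g 0
      simp only [hg, hs]
      norm_num
      split
      · rename_i h
        rw [div_le_one (hε _)]
        have h3 := mul_le_mul_of_nonneg_left (hmε ⟨0, h.1⟩) (inv_nonneg.2 hm0.le)
        rw [mul_one, ← mul_assoc, inv_mul_cancel₀ hm0.ne', one_mul] at h3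
        simpa using h3
      · norm_num
    | Nat.succ k' =>
      show g (k' + 1 + 1) ≤ g (k' + 1)
      simp only [hg, if_neg (Nat.succ_ne_zero _), Nat.add_sub_cancel]
      exact hs_step k'
  have hg0 : g 0 = 1 := by simp [hg]
  have hgend : g (t + 1) = 0 := by
    simp only [hg, if_neg (Nat.succ_ne_zero _), Nat.add_sub_cancel, hs]
    rw [dif_neg]
    rintro ⟨h, -⟩; exact lt_irrefl t h
  set w : Fin (t+1) → ℝ := fun k => g (k : ℕ) - g ((k : ℕ) + 1) with hw
  have hw_nonneg : ∀ k, 0 ≤ w k := fun k => sub_nonneg.2 (hg_step _)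
  have hw_sum : ∑ k : Fin (t+1), w k = 1 := by
    rw [hw, Fin.sum_univ_eq_sum_range (fun k => g k - g (k + 1)) (t+1),
      Finset.sum_range_sub', hg0, hgend, sub_zero]
  have hw_tail : ∀ i : Fin t, ∑ k ∈ Finset.filter
      (fun k : Fin (t+1) => (i : ℕ) < (k : ℕ)) Finset.univ, w k = s (i : ℕ) := by
    intro i
    have hsplit := Finset.sum_filter_add_sum_filter_not Finset.univ
      (fun k : Fin (t+1) => (i : ℕ) < (k : ℕ)) w
    have heq : Finset.filter (fun k : Fin (t+1) => ¬ (i : ℕ) < (k : ℕ)) Finset.univ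
        = Finset.filter (fun k : Fin (t+1) => (k : ℕ) ≤ (i : ℕ)) Finset.univ := by
      apply Finset.filter_congr; intro k _; simp [not_lt]
    rw [heq] at hsplit
    have htel := tele_aux g (i : ℕ) (Nat.lt_succ_of_lt i.isLt)
    have : ∑ k ∈ Finset.filter (fun k : Fin (t+1) => (k : ℕ) ≤ (i : ℕ)) Finset.univ, w k
        = g 0 - g ((i:ℕ) + 1) := htel
    rw [hw_sum, this, hg0] at hsplit
    have hg1 : g ((i:ℕ) + 1) = s (i : ℕ) := by
      simp only [hg, if_neg (Nat.succ_ne_zero _), Nat.add_sub_cancel]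
    linarith [hsplit, hg1]
  -- the combination value
  have hmem : Finset.univ.centerMass w p ∈ convexHull ℝ (Set.range p) :=
    Finset.centerMass_mem_convexHull Finset.univ (fun k _ => hw_nonneg k)
      (by rw [hw_sum]; norm_num) (fun k _ => Set.mem_range_self k)
  rw [Finset.centerMass_eq_of_sum_1 _ p hw_sum] at hmem
  have hvert : ∑ k : Fin (t+1), w k • p k = vert u0 u m j := by
    simp only [hp, smul_add]
    rw [Finset.sum_add_distrib, ← Finset.sum_smul, hw_sum, one_smul]
    unfold vert
    congr 1
    -- swap sums
    have step1 : ∀ k : Fin (t+1),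
        w k • ∑ i ∈ Finset.filter (fun i : Fin t => (i:ℕ) < (k:ℕ)) Finset.univ, ε i • u i
        = ∑ i : Fin t, if (i:ℕ) < (k:ℕ) then w k • ε i • u i else 0 := by
      intro k
      rw [Finset.smul_sum, Finset.sum_filter]
    simp_rw [step1]
    rw [Finset.sum_comm]
    have step2 : ∀ i : Fin t,
        (∑ k : Fin (t+1), if (i:ℕ) < (k:ℕ) then w k • ε i • u i else 0)
        = s (i:ℕ) • ε i • u i := by
      intro i
      rw [← Finset.sum_filter, ← Finset.sum_smul, hw_tail i]
    simp_rw [step2]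
    rw [Finset.sum_filter]
    refine Finset.sum_congr rfl fun i _ => ?_
    by_cases hij : (i:ℕ) < (j:ℕ)
    · rw [if_pos hij]
      simp only [hs, dif_pos (⟨i.isLt, hij⟩ : (i:ℕ) < t ∧ (i:ℕ) < (j:ℕ)), Fin.eta]
      rw [smul_smul, div_mul_cancel₀ _ (hε i).ne']
    · rw [if_neg hij]
      simp only [hs]
      rw [dif_neg (by rintro ⟨-, h⟩; exact hij h)]
      simp
  rw [hvert] at hmem
  exact hmem
end
end

section
/- Let A be the set of continuous functions f : [0,1]^n → [0,1] generated by the coordinate projections under ¬f = 1-f and f ⊕ g = min(1, f+g), and let U = (u_0, u_1, …, u_t) be a differential valuation (i.e., each T_{U,m} ⊆ [0,1]^n for all large m). Then the set p_U = { f ∈ A : f vanishes identically on T_{U,m} for some m } is closed under ⊕, is downward closed (if g ≤ f pointwise and f ∈ p_U then g ∈ p_U), and contains the constant 0 function but not the constant 1 function. -/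
open Filter Topology Set

noncomputable section

/-- `U = (u₀,…,u_t)` is a differential valuation: `u₁,…,u_t` are pairwise orthogonal
unit vectors and `T_{U,m} ⊆ [0,1]^n` for all large `m`. -/
def DVal {n t : ℕ} (u0 : Fin n → ℝ) (u : Fin t → Fin n → ℝ) : Prop :=
  (∀ i, dot (u i) (u i) = 1) ∧ (∀ i j, i ≠ j → dot (u i) (u j) = 0) ∧
    ∃ M : ℕ, 1 ≤ M ∧ ∀ m, M ≤ m → Tsimp u0 u m ⊆ cube n

/-- The prime ideal `p_U` of functions vanishing on some `T_{U,m}`. -/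
def pU {n t : ℕ} (u0 : Fin n → ℝ) (u : Fin t → Fin n → ℝ) :
    Set ((Fin n → ℝ) → ℝ) :=
  {f | Luk n f ∧ ∃ m : ℕ, 1 ≤ m ∧ ∀ x ∈ Tsimp u0 u m, f x = 0}


namespace PUaux

variable {n t : ℕ}

def uu (u : Fin t → Fin n → ℝ) (i : ℕ) : Fin n → ℝ :=
  if h : i < t then u ⟨i, h⟩ else 0

lemma vert_eq (u0 : Fin n → ℝ) (u : Fin t → Fin n → ℝ) (m : ℕ) (j : Fin (t+1)) :
    vert u0 u m j = u0 + ∑ i ∈ Finset.range (j : ℕ), ((m:ℝ) ^ (i+1))⁻¹ • uu u i := by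
  unfold vert
  congr 1
  calc ∑ i ∈ Finset.filter (fun i : Fin t => (i : ℕ) < (j : ℕ)) Finset.univ,
        ((m : ℝ) ^ ((i : ℕ) + 1))⁻¹ • u i
      = ∑ i : Fin t, (fun k : ℕ =>
          if k < (j:ℕ) then ((m:ℝ)^(k+1))⁻¹ • uu u k else 0) (i:ℕ) := by
        rw [Finset.sum_filter]
        refine Finset.sum_congr rfl fun i _ => ?_
        simp only [uu, i.isLt, dif_pos, Fin.eta]
    _ = ∑ k ∈ Finset.range t,
          (if k < (j:ℕ) then ((m:ℝ)^(k+1))⁻¹ • uu u k else 0) := by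
        exact Fin.sum_univ_eq_sum_range
          (fun k : ℕ => if k < (j:ℕ) then ((m:ℝ)^(k+1))⁻¹ • uu u k else 0) t
    _ = ∑ k ∈ Finset.range (j:ℕ),
          (if k < (j:ℕ) then ((m:ℝ)^(k+1))⁻¹ • uu u k else 0) := by
        refine (Finset.sum_subset (Finset.range_subset_range.2 (Nat.lt_succ_iff.mp j.isLt))
          fun k _ hk => ?_).symm
        exact if_neg (by simpa using hk)
    _ = ∑ k ∈ Finset.range (j:ℕ), ((m:ℝ)^(k+1))⁻¹ • uu u k :=
        Finset.sum_congr rfl fun k hk => if_pos (Finset.mem_range.1 hk)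

lemma lam_sum (r : ℝ) (t j a : ℕ) (hj : j ≤ t) (ha : a ≤ j) :
    ∑ k ∈ Finset.Ico a (t+1),
      (if k < j then r^k - r^(k+1) else if k = j then r^j else 0) = r^a := by
  rw [← Finset.sum_Ico_consecutive _ ha (Nat.le_succ_of_le hj)]
  have h1 : ∑ k ∈ Finset.Ico a j,
      (if k < j then r^k - r^(k+1) else if k = j then r^j else 0) = r^a - r^j := by
    rw [Finset.sum_congr rfl (fun k hk => if_pos (Finset.mem_Ico.1 hk).2),
      Finset.sum_Ico_eq_sub _ ha, Finset.sum_range_sub' (fun k => r^k),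
      Finset.sum_range_sub' (fun k => r^k)]
    ring
  have h2 : ∑ k ∈ Finset.Ico j (t+1),
      (if k < j then r^k - r^(k+1) else if k = j then r^j else 0) = r^j := by
    rw [Finset.sum_eq_sum_Ico_succ_bot (Nat.lt_succ_of_le hj), if_neg (lt_irrefl j),
      if_pos rfl]
    have hz : ∑ k ∈ Finset.Ico (j+1) (t+1),
        (if k < j then r^k - r^(k+1) else if k = j then r^j else 0) = 0 :=
      Finset.sum_eq_zero fun k hk => by
        have hk1 := (Finset.mem_Ico.1 hk).1
        rw [if_neg (by omega), if_neg (by omega)]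
    rw [hz, add_zero]
  rw [h1, h2]; ring

lemma lam_sum_zero (r : ℝ) (t j a : ℕ) (ha : j < a) :
    ∑ k ∈ Finset.Ico a (t+1),
      (if k < j then r^k - r^(k+1) else if k = j then r^j else 0) = 0 :=
  Finset.sum_eq_zero fun k hk => by
    have hk1 := (Finset.mem_Ico.1 hk).1
    rw [if_neg (by omega), if_neg (by omega)]

lemma Tsimp_mono (u0 : Fin n → ℝ) (u : Fin t → Fin n → ℝ) {m m' : ℕ}
    (hm : 1 ≤ m) (hmm : m ≤ m') : Tsimp u0 u m' ⊆ Tsimp u0 u m := by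
  unfold Tsimp
  refine convexHull_min ?_ (convex_convexHull ℝ _)
  rintro _ ⟨j, rfl⟩
  have hm0 : (0:ℝ) < m := by exact_mod_cast hm
  have hm'0 : (0:ℝ) < m' := lt_of_lt_of_le hm0 (by exact_mod_cast hmm)
  set r : ℝ := (m:ℝ)/(m':ℝ) with hr
  have hr0 : 0 ≤ r := le_of_lt (div_pos hm0 hm'0)
  have hr1 : r ≤ 1 := (div_le_one hm'0).2 (by exact_mod_cast hmm)
  set lam : ℕ → ℝ := fun k =>
    if k < (j:ℕ) then r^k - r^(k+1) else if k = (j:ℕ) then r^(j:ℕ) else 0 with hlam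
  have hjle : (j:ℕ) ≤ t := Nat.lt_succ_iff.mp j.isLt
  have hsum1 : ∑ k ∈ Finset.range (t+1), lam k = 1 := by
    rw [Finset.range_eq_Ico, lam_sum r t (j:ℕ) 0 hjle (Nat.zero_le _), pow_zero]
  set a : ℕ → Fin n → ℝ := fun i => ((m:ℝ)^(i+1))⁻¹ • uu u i with haf
  have hsum : ∑ k : Fin (t+1), lam (k:ℕ) • vert u0 u m k = vert u0 u m' j := by
    calc ∑ k : Fin (t+1), lam (k:ℕ) • vert u0 u m k
        = ∑ k ∈ Finset.range (t+1), lam k • (u0 + ∑ i ∈ Finset.range k, a i) := by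
          rw [Finset.sum_congr rfl
            (fun k _ => by rw [vert_eq]),
            Fin.sum_univ_eq_sum_range (fun k => lam k • (u0 + ∑ i ∈ Finset.range k, a i))]
      _ = (∑ k ∈ Finset.range (t+1), lam k) • u0
          + ∑ k ∈ Finset.range (t+1), ∑ i ∈ Finset.range k, lam k • a i := by
          simp [smul_add, Finset.sum_add_distrib, Finset.sum_smul, Finset.smul_sum]
      _ = u0 + ∑ i ∈ Finset.range (t+1),
            (∑ k ∈ Finset.Ico (i+1) (t+1), lam k) • a i := by
          rw [hsum1, one_smul]
          congr 1
          simp only [Finset.range_eq_Ico]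
          rw [← Finset.sum_Ico_Ico_comm' 0 (t+1) (fun i k => lam k • a i)]
          exact Finset.sum_congr rfl fun i _ => (Finset.sum_smul).symm
      _ = ∑ i ∈ Finset.range (t+1),
            (if i < (j:ℕ) then ((m':ℝ)^(i+1))⁻¹ • uu u i else 0) + u0 := by
          rw [add_comm]
          congr 1
          refine Finset.sum_congr rfl fun i _ => ?_
          by_cases hij : i < (j:ℕ)
          · rw [if_pos hij, hlam, lam_sum r t (j:ℕ) (i+1) hjle (by omega), haf,
              smul_smul]
            congr 1
            rw [hr, div_pow]
            field_simp
          · rw [if_neg hij, hlam, lam_sum_zero r t (j:ℕ) (i+1) (by omega), zero_smul]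
      _ = vert u0 u m' j := by
          rw [vert_eq, add_comm]
          congr 1
          rw [← Finset.sum_subset (Finset.range_subset_range.2 (Nat.le_succ_of_le hjle))
            (fun k _ hk => if_neg (by simpa using hk))]
          exact Finset.sum_congr rfl fun k hk => if_pos (Finset.mem_range.1 hk)
  rw [← hsum]
  exact Convex.sum_mem (convex_convexHull ℝ _)
    (fun k _ => by
      simp only [hlam]
      split_ifs with h1 h2
      · exact sub_nonneg.2 (pow_le_pow_of_le_one hr0 hr1 (Nat.le_succ _))
      · exact pow_nonneg hr0 _
      · exact le_refl 0)
    (by rw [Fin.sum_univ_eq_sum_range lam (t+1)]; exact hsum1)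
    (fun k _ => subset_convexHull ℝ _ (Set.mem_range_self k))

end PUaux

namespace PUaux

lemma luk_mem_Icc {n : ℕ} {f : (Fin n → ℝ) → ℝ} (hf : Luk n f) :
    ∀ x ∈ cube n, f x ∈ Set.Icc (0:ℝ) 1 := by
  induction hf with
  | proj i => exact fun x hx => hx i
  | neg hf ih =>
      intro x hx
      have h := ih x hx
      simp only [Set.mem_Icc] at h ⊢
      exact ⟨by linarith [h.2], by linarith [h.1]⟩
  | oplus hf hg ihf ihg =>
      intro x hx
      have h1 := ihf x hx
      have h2 := ihg x hx
      simp only [Set.mem_Icc] at h1 h2 ⊢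
      exact ⟨le_min zero_le_one (by linarith [h1.1, h2.1]), min_le_left _ _⟩

lemma luk_one {n : ℕ} (hn : 0 < n) : Luk n (fun _ : Fin n → ℝ => (1:ℝ)) := by
  have h := Luk.oplus (Luk.neg (Luk.proj (n := n) ⟨0, hn⟩)) (Luk.proj (n := n) ⟨0, hn⟩)
  have e : (fun x : Fin n → ℝ => min 1 ((1 - x ⟨0,hn⟩) + x ⟨0,hn⟩))
      = fun _ : Fin n → ℝ => (1:ℝ) := by
    funext x; rw [sub_add_cancel, min_self]
  rwa [e] at h

lemma luk_zero {n : ℕ} (hn : 0 < n) : Luk n (fun _ : Fin n → ℝ => (0:ℝ)) := by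
  have h := Luk.neg (luk_one hn)
  have e : (fun _ : Fin n → ℝ => (1:ℝ) - 1) = fun _ : Fin n → ℝ => (0:ℝ) := by
    funext x; ring
  rwa [e] at h

end PUaux

/-- `p_U` is a proper ideal of the algebra of truth functions:
closed under `⊕`, downward closed, containing `0` but not `1`. -/
theorem pU_proper_ideal {n t : ℕ} (hn : 0 < n)
    (u0 : Fin n → ℝ) (u : Fin t → Fin n → ℝ) (hU : DVal u0 u) :
    (∀ f g, f ∈ pU u0 u → g ∈ pU u0 u →
        (fun x => min 1 (f x + g x)) ∈ pU u0 u) ∧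
    (∀ f g, Luk n g → f ∈ pU u0 u → (∀ x ∈ cube n, g x ≤ f x) → g ∈ pU u0 u) ∧
    (fun _ => (0:ℝ)) ∈ pU u0 u ∧
    (fun _ => (1:ℝ)) ∉ pU u0 u := by
  obtain ⟨-, -, M, hM1, hMcube⟩ := hU
  refine ⟨?_, ?_, ?_, ?_⟩
  · rintro f g ⟨hf, m1, hm1, hf0⟩ ⟨hg, m2, hm2, hg0⟩
    refine ⟨Luk.oplus hf hg, max m1 m2, le_trans hm1 (le_max_left _ _), fun x hx => ?_⟩
    show min 1 (f x + g x) = 0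
    rw [hf0 x (PUaux.Tsimp_mono u0 u hm1 (le_max_left _ _) hx),
        hg0 x (PUaux.Tsimp_mono u0 u hm2 (le_max_right _ _) hx)]
    norm_num
  · rintro f g hg ⟨hf, m1, hm1, hf0⟩ hle
    refine ⟨hg, max m1 M, le_trans hm1 (le_max_left _ _), fun x hx => ?_⟩
    have hxc : x ∈ cube n := hMcube _ (le_max_right _ _) hx
    have h1 : g x ≤ f x := hle x hxc
    have h2 := hf0 x (PUaux.Tsimp_mono u0 u hm1 (le_max_left _ _) hx)
    have h3 := (PUaux.luk_mem_Icc hg x hxc).1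
    linarith
  · exact ⟨PUaux.luk_zero hn, M, hM1, fun x _ => rfl⟩
  · rintro ⟨-, m, hm, h0⟩
    exact one_ne_zero (h0 (vert u0 u m 0) (subset_convexHull ℝ _ (Set.mem_range_self 0)))
end
end

section
/- With A and p_U as in the previous statement, p_U is prime: for all f, g ∈ A, either max(f - g, 0) ∈ p_U or max(g - f, 0) ∈ p_U (where truncated subtraction is pointwise). -/
open Filter Topology Set

noncomputable section

/-!
On `T_{U,m}` every function of `A` eventually (in `m`) agrees with an affine map: this is clear
for projections and `¬`, and for `f ⊕ g = min 1 (f + g)` it follows once the affine map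
`φ + ψ - 1` has eventually constant sign on `T_{U,m}`. An affine map has constant sign on a
simplex iff it has on its vertices, where its values are `β + ∑_{i<j} α_i / m^(i+1)`; for large
`m` all of these take the sign of the first nonzero number among `β, α_0, α_1, …`. Hence `f ≤ g`
or `g ≤ f` on some `T_{U,m}`, and the corresponding truncated difference vanishes there.
-/

section ScaledPartialSum

variable {t : ℕ}

def scaledPartialSum (β : ℝ) (α : Fin t → ℝ) (m : ℕ) (j : Fin (t+1)) : ℝ :=
  β + ∑ i ∈ Finset.filter (fun i : Fin t => (i : ℕ) < (j : ℕ)) Finset.univ,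
    ((m : ℝ) ^ ((i : ℕ) + 1))⁻¹ * α i

lemma scaledPartialSum_apply_zero (β : ℝ) (α : Fin t → ℝ) (m : ℕ) :
    scaledPartialSum β α m 0 = β := by
  simp [scaledPartialSum]

lemma scaledPartialSum_zero_succ (α : Fin (t+1) → ℝ) (m : ℕ) (j : Fin (t+1)) :
    scaledPartialSum 0 α m j.succ = (m : ℝ)⁻¹ * scaledPartialSum (α 0) (Fin.tail α) m j := by
  simp only [scaledPartialSum, Finset.sum_filter, Fin.sum_univ_succ, Fin.val_succ, Fin.val_zero,
    Fin.tail, mul_add, Finset.mul_sum, pow_succ, mul_inv, zero_add, Nat.add_lt_add_iff_right,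
    Nat.zero_lt_succ, if_true, pow_zero, inv_one, one_mul, mul_ite, mul_zero]
  congr 1
  exact Finset.sum_congr rfl fun i _ => by split_ifs <;> ring

lemma tendsto_scaledPartialSum (β : ℝ) (α : Fin t → ℝ) (j : Fin (t+1)) :
    Tendsto (fun m => scaledPartialSum β α m j) atTop (𝓝 β) := by
  have hterm : ∀ i : Fin t,
      Tendsto (fun m : ℕ => ((m : ℝ) ^ ((i : ℕ) + 1))⁻¹ * α i) atTop (𝓝 0) := fun i => by
    simpa using ((tendsto_inv_atTop_zero.comp (tendsto_pow_atTop (Nat.succ_ne_zero i))).comp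
      tendsto_natCast_atTop_atTop).mul_const (α i)
  simpa [scaledPartialSum] using tendsto_const_nhds.add (tendsto_finsetSum _ fun i _ => hterm i)

lemma scaledPartialSum_eventually_nonneg_or_nonpos (β : ℝ) (α : Fin t → ℝ) :
    (∀ᶠ m in atTop, ∀ j, 0 ≤ scaledPartialSum β α m j) ∨
      ∀ᶠ m in atTop, ∀ j, scaledPartialSum β α m j ≤ 0 := by
  induction t generalizing β with
  | zero =>
    simpa only [scaledPartialSum, Finset.univ_eq_empty, Finset.filter_empty, Finset.sum_empty,
      add_zero, eventually_const, forall_const] using le_total 0 β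
  | succ t ih =>
    rcases lt_trichotomy β 0 with hβ | rfl | hβ
    · exact .inr <| eventually_all.2 fun j =>
        ((tendsto_scaledPartialSum β α j).eventually_lt_const hβ).mono fun _ h => h.le
    · rcases ih (α 0) (Fin.tail α) with h | h
      · refine .inl (h.mono fun m hm => Fin.cases ?_ fun j => ?_)
        · simp [scaledPartialSum_apply_zero]
        · rw [scaledPartialSum_zero_succ]
          exact mul_nonneg (by positivity) (hm j)
      · refine .inr (h.mono fun m hm => Fin.cases ?_ fun j => ?_)
        · simp [scaledPartialSum_apply_zero]
        · rw [scaledPartialSum_zero_succ]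
          exact mul_nonpos_of_nonneg_of_nonpos (by positivity) (hm j)
    · exact .inl <| eventually_all.2 fun j =>
        ((tendsto_scaledPartialSum β α j).eventually_const_lt hβ).mono fun _ h => h.le

end ScaledPartialSum

section Simplex

variable {n t : ℕ} (u0 : Fin n → ℝ) (u : Fin t → Fin n → ℝ)

lemma AffineMap.apply_vert (φ : (Fin n → ℝ) →ᵃ[ℝ] ℝ) (m : ℕ) (j : Fin (t+1)) :
    φ (vert u0 u m j) = scaledPartialSum (φ u0) (fun i => φ.linear (u i)) m j := by
  rw [vert, add_comm, ← vadd_eq_add, AffineMap.map_vadd, vadd_eq_add, map_sum, add_comm]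
  simp [scaledPartialSum]

lemma Tsimp_subset_of_forall_vert_mem {C : Set (Fin n → ℝ)} (hC : Convex ℝ C) {m : ℕ}
    (h : ∀ j, vert u0 u m j ∈ C) : Tsimp u0 u m ⊆ C :=
  convexHull_min (Set.range_subset_iff.2 h) hC

lemma AffineMap.eventually_nonneg_or_nonpos_on_Tsimp (φ : (Fin n → ℝ) →ᵃ[ℝ] ℝ) :
    (∀ᶠ m in atTop, ∀ x ∈ Tsimp u0 u m, 0 ≤ φ x) ∨
      ∀ᶠ m in atTop, ∀ x ∈ Tsimp u0 u m, φ x ≤ 0 := by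
  rcases scaledPartialSum_eventually_nonneg_or_nonpos (φ u0) (fun i => φ.linear (u i)) with h | h
  · refine .inl (h.mono fun m hm => Tsimp_subset_of_forall_vert_mem u0 u
      ((convex_Ici 0).affine_preimage φ) fun j => ?_)
    simpa [Set.mem_preimage, φ.apply_vert] using hm j
  · refine .inr (h.mono fun m hm => Tsimp_subset_of_forall_vert_mem u0 u
      ((convex_Iic 0).affine_preimage φ) fun j => ?_)
    simpa [Set.mem_preimage, φ.apply_vert] using hm j

lemma AffineMap.eventually_le_or_ge_on_Tsimp (φ ψ : (Fin n → ℝ) →ᵃ[ℝ] ℝ) :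
    (∀ᶠ m in atTop, ∀ x ∈ Tsimp u0 u m, φ x ≤ ψ x) ∨
      ∀ᶠ m in atTop, ∀ x ∈ Tsimp u0 u m, ψ x ≤ φ x := by
  rcases (φ - ψ).eventually_nonneg_or_nonpos_on_Tsimp u0 u with h | h
  · exact .inr (h.mono fun _ hm x hx => by simpa using hm x hx)
  · exact .inl (h.mono fun _ hm x hx => by simpa using hm x hx)

end Simplex

namespace Luk

variable {n t : ℕ} {f g : (Fin n → ℝ) → ℝ}

lemma truncSub (hf : Luk n f) (hg : Luk n g) : Luk n (fun x => max (f x - g x) 0) := by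
  have h : (fun x => max (f x - g x) 0) = fun x => 1 - min 1 ((1 - f x) + g x) := by
    funext x
    rcases le_total (f x) (g x) with hfg | hfg
    · rw [max_eq_right (by linarith), min_eq_left (by linarith)]; ring
    · rw [max_eq_left (by linarith), min_eq_right (by linarith)]; ring
  exact h ▸ (hf.neg.oplus hg).neg

lemma eventually_eqOn_affineMap (hf : Luk n f) (u0 : Fin n → ℝ) (u : Fin t → Fin n → ℝ) :
    ∃ φ : (Fin n → ℝ) →ᵃ[ℝ] ℝ, ∀ᶠ m in atTop, EqOn f φ (Tsimp u0 u m) := by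
  induction hf with
  | proj i => exact ⟨(LinearMap.proj i).toAffineMap, .of_forall fun _ _ _ => rfl⟩
  | neg _ ih =>
    obtain ⟨φ, hφ⟩ := ih
    refine ⟨AffineMap.const ℝ _ (1 : ℝ) - φ, hφ.mono fun m hm x hx => ?_⟩
    simp [hm hx]
  | oplus _ _ ihf ihg =>
    obtain ⟨φ, hφ⟩ := ihf
    obtain ⟨ψ, hψ⟩ := ihg
    rcases (φ + ψ).eventually_le_or_ge_on_Tsimp u0 u (AffineMap.const ℝ _ 1) with h | h
    · refine ⟨φ + ψ, (hφ.and (hψ.and h)).mono ?_⟩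
      rintro m ⟨hφm, hψm, hm⟩ x hx
      simpa [hφm hx, hψm hx] using hm x hx
    · refine ⟨AffineMap.const ℝ _ 1, (hφ.and (hψ.and h)).mono ?_⟩
      rintro m ⟨hφm, hψm, hm⟩ x hx
      simpa [hφm hx, hψm hx] using hm x hx

lemma eventually_le_or_ge (hf : Luk n f) (hg : Luk n g) (u0 : Fin n → ℝ)
    (u : Fin t → Fin n → ℝ) :
    (∀ᶠ m in atTop, ∀ x ∈ Tsimp u0 u m, f x ≤ g x) ∨
      ∀ᶠ m in atTop, ∀ x ∈ Tsimp u0 u m, g x ≤ f x := by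
  obtain ⟨φ, hφ⟩ := hf.eventually_eqOn_affineMap u0 u
  obtain ⟨ψ, hψ⟩ := hg.eventually_eqOn_affineMap u0 u
  refine (φ.eventually_le_or_ge_on_Tsimp u0 u ψ).imp (fun h => ?_) (fun h => ?_) <;>
  · refine (hφ.and (hψ.and h)).mono ?_
    rintro m ⟨hφm, hψm, hm⟩ x hx
    simpa [hφm hx, hψm hx] using hm x hx

lemma truncSub_mem_pU (hf : Luk n f) (hg : Luk n g) {u0 : Fin n → ℝ} {u : Fin t → Fin n → ℝ}
    (h : ∀ᶠ m in atTop, ∀ x ∈ Tsimp u0 u m, f x ≤ g x) :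
    (fun x => max (f x - g x) 0) ∈ pU u0 u := by
  obtain ⟨m, hm, hfg⟩ := ((eventually_ge_atTop 1).and h).exists
  exact ⟨hf.truncSub hg, m, hm, fun x hx => max_eq_right (sub_nonpos.2 (hfg x hx))⟩

end Luk

theorem pU_prime_general {n t : ℕ} (u0 : Fin n → ℝ) (u : Fin t → Fin n → ℝ)
    (f g : (Fin n → ℝ) → ℝ) (hf : Luk n f) (hg : Luk n g) :
    (fun x => max (f x - g x) 0) ∈ pU u0 u ∨
    (fun x => max (g x - f x) 0) ∈ pU u0 u :=
  (hf.eventually_le_or_ge hg u0 u).imp (hf.truncSub_mem_pU hg) (hg.truncSub_mem_pU hf)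

/-- `p_U` is prime: for truth functions `f, g`, one of the
truncated differences `max (f - g) 0`, `max (g - f) 0` lies in `p_U`. -/
theorem pU_prime {n t : ℕ} (u0 : Fin n → ℝ) (u : Fin t → Fin n → ℝ)
    (hU : DVal u0 u) (f g : (Fin n → ℝ) → ℝ) (hf : Luk n f) (hg : Luk n g) :
    (fun x => max (f x - g x) 0) ∈ pU u0 u ∨
    (fun x => max (g x - f x) 0) ∈ pU u0 u :=
  pU_prime_general u0 u f g hf hg
end
end

section
/- For a differential valuation U = (u_0, u_1) of order 1 in ℝ^n and a function f : [0,1]^n → [0,1] that is continuous and piecewise linear, f belongs to p_U (i.e., f vanishes on conv(u_0, u_0 + u_1/m) for some positive integer m) if and only if f(u_0) = 0 and the one-sided directional derivative ∂f(u_0)/∂u_1 equals 0. -/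
open Filter Topology Set

noncomputable section

/-- `f` is piecewise linear on the cube: finitely many affine pieces. -/
def PL {n : ℕ} (f : (Fin n → ℝ) → ℝ) : Prop :=
  ∃ (k : ℕ) (c : Fin k → ℝ) (a : Fin k → Fin n → ℝ),
    ∀ x ∈ cube n, ∃ i : Fin k, f x = c i + ∑ j, a i j * x j

/-!
Along the ray `t ↦ u₀ + t • u₁` a piecewise linear `f` agrees, for each small `t > 0`, with one
of finitely many affine functions `b + s * t`. Suppose `f u₀ = 0` and `f (u₀ + t • u₁) = o(t)`.
A piece with `b ≠ 0` cannot agree with `f` near `0`, since `f` tends to `0` there; a piece with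
`b = 0 ≠ s` cannot either, since `f / t` tends to `0` rather than `s`. So near `0` only the zero
piece is used, i.e. `f` vanishes on a short initial segment of the ray.
-/

theorem segment_add_smul_eq_image {E : Type*} [AddCommGroup E] [Module ℝ E] (x v : E) {r : ℝ}
    (hr : 0 ≤ r) : segment ℝ x (x + r • v) = (fun t : ℝ => x + t • v) '' Icc 0 r := by
  have hline : ⇑(AffineMap.lineMap x (x + v)) = fun t : ℝ => x + t • v := by
    ext t; simp [AffineMap.lineMap_apply, add_comm]
  rw [← hline, ← segment_eq_Icc hr, image_segment, hline]
  simp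

theorem exists_forall_segment_iff_eventually {E : Type*} [AddCommGroup E] [Module ℝ E]
    (x v : E) (P : E → Prop) :
    (∃ m : ℕ, 1 ≤ m ∧ ∀ y ∈ segment ℝ x (x + (m : ℝ)⁻¹ • v), P y) ↔
      ∀ᶠ t in 𝓝[≥] (0 : ℝ), P (x + t • v) := by
  constructor
  · rintro ⟨m, hm, hP⟩
    have hpos : (0 : ℝ) < (m : ℝ)⁻¹ := inv_pos.2 (Nat.cast_pos.2 hm)
    filter_upwards [Icc_mem_nhdsGE hpos] with t ht
    exact hP _ (segment_add_smul_eq_image x v hpos.le ▸ mem_image_of_mem _ ht)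
  · intro h
    obtain ⟨τ, hτ : (0 : ℝ) < τ, hsub⟩ := mem_nhdsGE_iff_exists_Ico_subset.1 h
    obtain ⟨m, hm⟩ := exists_nat_one_div_lt hτ
    refine ⟨m + 1, by omega, ?_⟩
    rw [segment_add_smul_eq_image x v (by positivity)]
    rintro _ ⟨t, ht, rfl⟩
    exact hsub ⟨ht.1, ht.2.trans_lt (by simpa using hm)⟩

theorem eventually_eq_affine_imp_eq_zero {φ : ℝ → ℝ}
    (hφ : Tendsto (fun t => φ t / t) (𝓝[>] 0) (𝓝 0)) (b s : ℝ) :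
    ∀ᶠ t in 𝓝[>] 0, φ t = b + s * t → φ t = 0 := by
  rcases eq_or_ne b 0 with rfl | hb
  · rcases eq_or_ne s 0 with rfl | hs
    · exact Eventually.of_forall fun t ht => by simpa using ht
    · filter_upwards [(hφ.sub_const s).eventually_ne (b₂ := 0) (by simpa using hs),
        self_mem_nhdsWithin] with t hne (ht : 0 < t) heq
      exact absurd (by rw [heq, zero_add, mul_div_cancel_right₀ _ ht.ne', sub_self]) hne
  · have hφ0 : Tendsto φ (𝓝[>] 0) (𝓝 0) := by
      have := hφ.mul (tendsto_nhdsWithin_of_tendsto_nhds (tendsto_id (x := 𝓝 (0 : ℝ))))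
      rw [mul_zero] at this
      refine this.congr' ?_
      filter_upwards [self_mem_nhdsWithin] with t (ht : 0 < t)
      exact div_mul_cancel₀ _ ht.ne'
    have hlim : Tendsto (fun t => φ t - (b + s * t)) (𝓝[>] 0) (𝓝 (0 - (b + s * 0))) :=
      hφ0.sub (tendsto_const_nhds.add (tendsto_const_nhds.mul
        (tendsto_nhdsWithin_of_tendsto_nhds tendsto_id)))
    filter_upwards [hlim.eventually_ne (b₂ := 0) (by simpa using hb)] with t hne heq
    exact absurd (sub_eq_zero.2 heq) hne

theorem eventually_eq_zero_of_piecewise_affine {ι : Type*} [Finite ι] {φ : ℝ → ℝ}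
    {b s : ι → ℝ} (hpl : ∀ᶠ t in 𝓝[>] 0, ∃ i, φ t = b i + s i * t)
    (hφ : Tendsto (fun t => φ t / t) (𝓝[>] 0) (𝓝 0)) : ∀ᶠ t in 𝓝[>] 0, φ t = 0 := by
  filter_upwards [hpl, eventually_all.2 fun i => eventually_eq_affine_imp_eq_zero hφ (b i) (s i)]
    with t ⟨i, hi⟩ himp
  exact himp i hi

theorem eventually_nhdsGE_eq_zero_iff_of_piecewise_affine {ι : Type*} [Finite ι] {φ : ℝ → ℝ}
    {b s : ι → ℝ} (hpl : ∀ᶠ t in 𝓝[>] 0, ∃ i, φ t = b i + s i * t) :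
    (∀ᶠ t in 𝓝[≥] 0, φ t = 0) ↔
      φ 0 = 0 ∧ Tendsto (fun t => (φ t - φ 0) / t) (𝓝[>] 0) (𝓝 0) := by
  rw [← nhdsGT_sup_nhdsWithin_singleton, eventually_sup, nhdsWithin_singleton, eventually_pure]
  constructor
  · rintro ⟨hφ, h0⟩
    refine ⟨h0, tendsto_const_nhds.congr' ?_⟩
    filter_upwards [hφ] with t ht
    simp [ht, h0]
  · rintro ⟨h0, hφ⟩
    simp only [h0, sub_zero] at hφ
    exact ⟨eventually_eq_zero_of_piecewise_affine hpl hφ, h0⟩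

theorem PL.exists_affine_pieces_along {n : ℕ} {f : (Fin n → ℝ) → ℝ} (hf : PL f)
    (x v : Fin n → ℝ) : ∃ (k : ℕ) (b s : Fin k → ℝ),
      ∀ t : ℝ, x + t • v ∈ cube n → ∃ i, f (x + t • v) = b i + s i * t := by
  obtain ⟨k, c, a, ha⟩ := hf
  refine ⟨k, fun i => c i + ∑ j, a i j * x j, fun i => ∑ j, a i j * v j, fun t ht => ?_⟩
  obtain ⟨i, hi⟩ := ha _ ht
  refine ⟨i, hi.trans ?_⟩
  simp only [Pi.add_apply, Pi.smul_apply, smul_eq_mul, mul_add, Finset.sum_add_distrib,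
    Finset.sum_mul, add_assoc]
  congr 2
  exact Finset.sum_congr rfl fun j _ => by ring

theorem order_one_pU_characterization_general {n : ℕ}
    (u0 u1 : Fin n → ℝ)
    (hseg : ∃ M : ℕ, 1 ≤ M ∧ ∀ m : ℕ, M ≤ m →
      segment ℝ u0 (u0 + ((m:ℝ))⁻¹ • u1) ⊆ cube n)
    (f : (Fin n → ℝ) → ℝ) (hfPL : PL f) :
    (∃ m : ℕ, 1 ≤ m ∧ ∀ x ∈ segment ℝ u0 (u0 + ((m:ℝ))⁻¹ • u1), f x = 0) ↔
    (f u0 = 0 ∧ Filter.Tendsto (fun ε : ℝ => (f (u0 + ε • u1) - f u0) / ε)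
      (nhdsWithin 0 (Set.Ioi 0)) (nhds 0)) := by
  obtain ⟨M, hM, hMseg⟩ := hseg
  have hcube : ∀ᶠ t in 𝓝[>] (0 : ℝ), u0 + t • u1 ∈ cube n :=
    nhdsWithin_mono _ Ioi_subset_Ici_self
      ((exists_forall_segment_iff_eventually u0 u1 (· ∈ cube n)).1 ⟨M, hM, hMseg M le_rfl⟩)
  obtain ⟨k, b, s, hpieces⟩ := hfPL.exists_affine_pieces_along u0 u1
  rw [exists_forall_segment_iff_eventually u0 u1 (f · = 0),
    eventually_nhdsGE_eq_zero_iff_of_piecewise_affine (hcube.mono hpieces), zero_smul, add_zero]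

/-- for a differential valuation `(u₀, u₁)` of order 1,
a continuous piecewise linear `f : [0,1]^n → [0,1]` vanishes on a segment
`conv(u₀, u₀ + u₁/m)` iff `f u₀ = 0` and `∂f(u₀)/∂u₁ = 0`. -/
theorem order_one_pU_characterization {n : ℕ}
    (u0 u1 : Fin n → ℝ) (hu1 : dot u1 u1 = 1)
    (hseg : ∃ M : ℕ, 1 ≤ M ∧ ∀ m : ℕ, M ≤ m →
      segment ℝ u0 (u0 + ((m:ℝ))⁻¹ • u1) ⊆ cube n)
    (f : (Fin n → ℝ) → ℝ) (hfc : ContinuousOn f (cube n)) (hfPL : PL f)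
    (hrange : ∀ x ∈ cube n, f x ∈ Set.Icc (0:ℝ) 1) :
    (∃ m : ℕ, 1 ≤ m ∧ ∀ x ∈ segment ℝ u0 (u0 + ((m:ℝ))⁻¹ • u1), f x = 0) ↔
    (f u0 = 0 ∧ Filter.Tendsto (fun ε : ℝ => (f (u0 + ε • u1) - f u0) / ε)
      (nhdsWithin 0 (Set.Ioi 0)) (nhds 0)) :=
  order_one_pU_characterization_general u0 u1 hseg f hfPL
end
end

section
/- Let f : [0,1]^n → [0,1] be continuous and piecewise linear, v ∈ [0,1]^n fixed. Then the map u ↦ ∂f(v)/∂u (one-sided directional derivative) is continuous on the set of unit vectors u for which v + εu ∈ [0,1]^n for all small ε > 0. -/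
open Filter Topology Set

noncomputable section

/-- The admissible directions at `v`: unit vectors `u` with `v + εu` in the
cube for all small `ε > 0`. -/
def Dirs {n : ℕ} (v : Fin n → ℝ) : Set (Fin n → ℝ) :=
  {u | dot u u = 1 ∧ ∃ ε₀ > (0:ℝ), ∀ ε : ℝ, 0 < ε → ε ≤ ε₀ → v + ε • u ∈ cube n}


lemma key {k : ℕ} (b s : Fin k → ℝ) (g : ℝ → ℝ) (T : ℝ) (hT : 0 < T)
    (hg : ContinuousOn g (Set.Icc 0 T))
    (hcov : ∀ t ∈ Set.Icc (0:ℝ) T, ∃ i, g t = b i + s i * t) :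
    ∃ i : Fin k, ∃ δ, 0 < δ ∧ δ ≤ T ∧ ∀ t ∈ Set.Icc (0:ℝ) δ, g t = b i + s i * t := by
  obtain ⟨i₀, _⟩ := hcov 0 ⟨le_refl _, hT.le⟩
  haveI : Nonempty (Fin k) := ⟨i₀⟩
  -- step 1 : uniform δ below which distinct pieces never meet
  set c : Fin k × Fin k → ℝ := fun p =>
    if 0 < (b p.2 - b p.1) / (s p.1 - s p.2) then (b p.2 - b p.1) / (s p.1 - s p.2) / 2 else T
    with hc
  obtain ⟨δ, hδpos, hδT, hδc⟩ :
      ∃ δ, 0 < δ ∧ δ ≤ T ∧ ∀ p : Fin k × Fin k, δ ≤ c p := by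
    refine ⟨min T (Finset.univ.inf' (by simp [Finset.univ_nonempty]) c), ?_, min_le_left _ _, ?_⟩
    · refine lt_min hT ?_
      rw [Finset.lt_inf'_iff]
      intro p _
      simp only [hc]
      split_ifs with h
      · linarith
      · exact hT
    · intro p
      exact le_trans (min_le_right _ _) (Finset.inf'_le _ (Finset.mem_univ p))
  have hsep : ∀ i j : Fin k, ∀ t : ℝ, 0 < t → t ≤ δ →
      b i + s i * t = b j + s j * t → b i = b j ∧ s i = s j := by
    intro i j t ht htδ heq
    by_cases hs : s i = s j
    · constructor
      · rw [hs] at heq; linarith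
      · exact hs
    · exfalso
      have hst : s i - s j ≠ 0 := sub_ne_zero.mpr hs
      have hteq : t = (b j - b i) / (s i - s j) := by
        field_simp
        linarith
      have h0 : 0 < (b j - b i) / (s i - s j) := hteq ▸ ht
      have := hδc (i, j)
      rw [hc] at this
      simp only [if_pos h0] at this
      rw [← hteq] at this
      linarith
  -- step 2 : propagation to the right
  have claim2 : ∀ t₁ : ℝ, 0 < t₁ → t₁ ≤ δ → ∀ i₁ : Fin k, g t₁ = b i₁ + s i₁ * t₁ →
      ∀ t ∈ Set.Icc t₁ δ, g t = b i₁ + s i₁ * t := by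
    intro t₁ ht₁ ht₁δ i₁ hi₁
    by_contra hcon
    push_neg at hcon
    obtain ⟨tst, htst, hgst⟩ := hcon
    set S : Set ℝ := {t | t ∈ Set.Icc t₁ tst ∧ g t = b i₁ + s i₁ * t} with hS
    have hsub : Set.Icc t₁ tst ⊆ Set.Icc 0 T :=
      Set.Icc_subset_Icc ht₁.le (le_trans htst.2 hδT)
    have hScl : IsClosed S := by
      have : S = Set.Icc t₁ tst ∩ (fun t => g t - (b i₁ + s i₁ * t)) ⁻¹' {0} := by
        ext t; simp [hS, sub_eq_zero]
      rw [this]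
      exact ContinuousOn.preimage_isClosed_of_isClosed
        ((hg.mono hsub).sub (by fun_prop)) isClosed_Icc isClosed_singleton
    have hSne : t₁ ∈ S := ⟨⟨le_refl _, htst.1⟩, hi₁⟩
    have hSbdd : BddAbove S := ⟨tst, fun t ht => ht.1.2⟩
    set m := sSup S with hm
    have hmS : m ∈ S := hScl.csSup_mem ⟨t₁, hSne⟩ hSbdd
    have hmlt : m < tst := by
      rcases lt_or_eq_of_le hmS.1.2 with h | h
      · exact h
      · exact absurd (h ▸ hmS.2) hgst
    have hmpos : 0 < m := lt_of_lt_of_le ht₁ hmS.1.1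
    have hmδ : m ≤ δ := le_trans hmS.1.2 htst.2
    -- points just to the right of m
    haveI : (𝓝[Set.Ioo m tst] m).NeBot := left_nhdsWithin_Ioo_neBot hmlt
    have hIoosub : Set.Ioo m tst ⊆ Set.Icc 0 T := fun t ht =>
      ⟨le_of_lt (lt_trans hmpos ht.1), le_trans ht.2.le (le_trans htst.2 hδT)⟩
    have hfreq : ∃ j : Fin k, ∃ᶠ t in 𝓝[Set.Ioo m tst] m, g t = b j + s j * t := by
      by_contra hcon2
      push_neg at hcon2
      have hall : ∀ᶠ t in 𝓝[Set.Ioo m tst] m, ∀ j : Fin k, ¬ g t = b j + s j * t :=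
        Filter.eventually_all.mpr hcon2
      have hmem : ∀ᶠ t in 𝓝[Set.Ioo m tst] m, t ∈ Set.Ioo m tst := self_mem_nhdsWithin
      obtain ⟨t, h1, h2⟩ := (hall.and hmem).exists
      obtain ⟨j, hj⟩ := hcov t (hIoosub h2)
      exact h1 j hj
    obtain ⟨j, hfreqj⟩ := hfreq
    have hmIcc : m ∈ Set.Icc (0:ℝ) T := ⟨hmpos.le, le_trans hmδ hδT⟩
    have htend_g : Filter.Tendsto g (𝓝[Set.Ioo m tst] m) (𝓝 (g m)) :=
      (hg m hmIcc).tendsto.mono_left (nhdsWithin_mono m hIoosub)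
    have htend_q : Filter.Tendsto (fun t => b j + s j * t) (𝓝[Set.Ioo m tst] m)
        (𝓝 (b j + s j * m)) := by
      apply Filter.Tendsto.mono_left _ nhdsWithin_le_nhds
      exact (continuous_const.add (continuous_const.mul continuous_id)).tendsto m
    have hqm : g m = b j + s j * m :=
      tendsto_nhds_unique_of_frequently_eq htend_g htend_q hfreqj
    have heqpieces : b j = b i₁ ∧ s j = s i₁ :=
      hsep j i₁ m hmpos hmδ (hqm ▸ hmS.2)
    have hfreqS : ∃ᶠ t in 𝓝[Set.Ioo m tst] m, t ∈ S := by
      refine (hfreqj.and_eventually self_mem_nhdsWithin).mono ?_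
      rintro t ⟨hgt, htmem⟩
      exact ⟨⟨le_trans hmS.1.1 htmem.1.le, htmem.2.le⟩,
        by rw [hgt, heqpieces.1, heqpieces.2]⟩
    obtain ⟨t, htS, htmem⟩ := (hfreqS.and_eventually self_mem_nhdsWithin).exists
    exact absurd (le_csSup hSbdd htS) (not_le.mpr htmem.1)
  -- step 3 : glue
  obtain ⟨i, hi⟩ := hcov (δ/2) ⟨by linarith, by linarith [hδT]⟩
  have h1 : ∀ t ∈ Set.Ioc (0:ℝ) δ, g t = b i + s i * t := by
    intro t ht
    by_cases hhalf : δ/2 ≤ t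
    · exact claim2 (δ/2) (by linarith) (by linarith) i hi t ⟨hhalf, ht.2⟩
    · push_neg at hhalf
      obtain ⟨j, hj⟩ := hcov t ⟨ht.1.le, le_trans ht.2 hδT⟩
      have hjprop := claim2 t ht.1 ht.2 j hj
      have hiprop := claim2 (δ/2) (by linarith) (by linarith) i hi
      have hδIcc1 : δ ∈ Set.Icc t δ := ⟨ht.2, le_refl _⟩
      have hδIcc2 : δ ∈ Set.Icc (δ/2) δ := ⟨by linarith, le_refl _⟩
      have heq : b j + s j * δ = b i + s i * δ := by
        rw [← hjprop δ hδIcc1, ← hiprop δ hδIcc2]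
      obtain ⟨hb, hs⟩ := hsep j i δ hδpos (le_refl _) heq
      rw [hj, hb, hs]
  have h0 : g 0 = b i := by
    haveI : (𝓝[Set.Ioo (0:ℝ) δ] 0).NeBot := left_nhdsWithin_Ioo_neBot hδpos
    have hsub0 : Set.Ioo (0:ℝ) δ ⊆ Set.Icc 0 T := fun t ht =>
      ⟨ht.1.le, le_trans ht.2.le hδT⟩
    have htend_g : Filter.Tendsto g (𝓝[Set.Ioo (0:ℝ) δ] 0) (𝓝 (g 0)) :=
      (hg 0 ⟨le_refl _, hT.le⟩).tendsto.mono_left (nhdsWithin_mono 0 hsub0)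
    have htend_q : Filter.Tendsto (fun t => b i + s i * t) (𝓝[Set.Ioo (0:ℝ) δ] 0)
        (𝓝 (b i + s i * 0)) := by
      apply Filter.Tendsto.mono_left _ nhdsWithin_le_nhds
      exact (continuous_const.add (continuous_const.mul continuous_id)).tendsto 0
    have heq : Filter.Tendsto g (𝓝[Set.Ioo (0:ℝ) δ] 0) (𝓝 (b i + s i * 0)) := by
      refine htend_q.congr' ?_
      filter_upwards [self_mem_nhdsWithin] with t ht
      exact (h1 t ⟨ht.1, ht.2.le⟩).symm
    have := tendsto_nhds_unique htend_g heq
    rw [this]; ring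
  refine ⟨i, δ, hδpos, hδT, ?_⟩
  intro t ht
  rcases eq_or_lt_of_le ht.1 with h | h
  · rw [← h, h0]; ring
  · exact h1 t ⟨h, ht.2⟩

lemma key2 {k : ℕ} (b s : Fin k → ℝ) (g : ℝ → ℝ) (T L : ℝ) (hT : 0 < T)
    (hg : ContinuousOn g (Set.Icc 0 T))
    (hcov : ∀ t ∈ Set.Icc (0:ℝ) T, ∃ i, g t = b i + s i * t)
    (hL : ∀ i, |s i| ≤ L) :
    |g T - g 0| ≤ L * T := by
  set S : Set ℝ := {t | t ∈ Set.Icc 0 T ∧ |g t - g 0| ≤ L * t} with hS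
  have hScl : IsClosed S := by
    have : S = Set.Icc 0 T ∩ (fun t => |g t - g 0| - L * t) ⁻¹' Set.Iic 0 := by
      ext t; simp [hS, sub_nonpos]
    rw [this]
    exact ContinuousOn.preimage_isClosed_of_isClosed
      (((hg.sub continuousOn_const).abs).sub (by fun_prop)) isClosed_Icc isClosed_Iic
  have hSne : (0:ℝ) ∈ S := ⟨⟨le_refl _, hT.le⟩, by simp⟩
  have hSbdd : BddAbove S := ⟨T, fun t ht => ht.1.2⟩
  set m := sSup S with hm
  have hmS : m ∈ S := hScl.csSup_mem ⟨0, hSne⟩ hSbdd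
  have hmT : m = T := by
    by_contra hne
    have hmlt : m < T := lt_of_le_of_ne hmS.1.2 hne
    -- apply key to shifted function
    have hT' : 0 < T - m := by linarith
    have hg' : ContinuousOn (fun t => g (m + t)) (Set.Icc 0 (T - m)) := by
      apply hg.comp (by fun_prop)
      intro t ht
      exact ⟨by linarith [hmS.1.1, ht.1], by linarith [ht.2]⟩
    have hcov' : ∀ t ∈ Set.Icc (0:ℝ) (T - m), ∃ i,
        g (m + t) = (b i + s i * m) + s i * t := by
      intro t ht
      obtain ⟨i, hi⟩ := hcov (m + t) ⟨by linarith [hmS.1.1, ht.1], by linarith [ht.2]⟩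
      exact ⟨i, by rw [hi]; ring⟩
    obtain ⟨j, δ, hδpos, hδle, hδ⟩ := key (fun i => b i + s i * m) s _ _ hT' hg' hcov'
    have h0 : g m = b j + s j * m := by
      have := hδ 0 ⟨le_refl _, hδpos.le⟩
      simpa using this
    have hδv : g (m + δ) = (b j + s j * m) + s j * δ := hδ δ ⟨hδpos.le, le_refl _⟩
    have hmem : m + δ ∈ S := by
      refine ⟨⟨by linarith [hmS.1.1], by linarith⟩, ?_⟩
      have h1 : |g (m + δ) - g m| ≤ L * δ := by
        rw [hδv, h0]
        have : (b j + s j * m) + s j * δ - (b j + s j * m) = s j * δ := by ring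
        rw [this, abs_mul, abs_of_pos hδpos]
        exact mul_le_mul_of_nonneg_right (hL j) hδpos.le
      calc |g (m + δ) - g 0| ≤ |g (m + δ) - g m| + |g m - g 0| := abs_sub_le _ _ _
        _ ≤ L * δ + L * m := add_le_add h1 hmS.2
        _ = L * (m + δ) := by ring
    exact absurd (le_csSup hSbdd hmem) (by linarith)
  rw [← hmT]
  exact hmS.2

lemma f_lip {n k : ℕ} (f : (Fin n → ℝ) → ℝ) (c : Fin k → ℝ) (a : Fin k → Fin n → ℝ)
    (hfc : ContinuousOn f (cube n))
    (hpl : ∀ x ∈ cube n, ∃ i, f x = c i + ∑ j, a i j * x j)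
    (L : ℝ) (hL : ∀ i, ∑ j, |a i j| ≤ L)
    (x y : Fin n → ℝ) (hx : x ∈ cube n) (hy : y ∈ cube n) :
    |f y - f x| ≤ (L * dist x y) * 1 := by
  -- the segment lies in the cube
  have hseg : ∀ t ∈ Set.Icc (0:ℝ) 1, x + t • (y - x) ∈ cube n := by
    intro t ht j
    have hxj := hx j; have hyj := hy j
    have : (x + t • (y - x)) j = (1 - t) * x j + t * y j := by
      simp [Pi.add_apply, Pi.smul_apply, Pi.sub_apply, smul_eq_mul]; ring
    rw [this]
    constructor
    · nlinarith [hxj.1, hyj.1, ht.1, ht.2]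
    · nlinarith [hxj.2, hyj.2, ht.1, ht.2]
  set g : ℝ → ℝ := fun t => f (x + t • (y - x)) with hgdef
  have hg : ContinuousOn g (Set.Icc 0 1) := by
    apply hfc.comp (by fun_prop)
    intro t ht
    exact hseg t ht
  have hcov : ∀ t ∈ Set.Icc (0:ℝ) 1, ∃ i,
      g t = (c i + ∑ j, a i j * x j) + (∑ j, a i j * (y j - x j)) * t := by
    intro t ht
    obtain ⟨i, hi⟩ := hpl _ (hseg t ht)
    refine ⟨i, ?_⟩
    rw [hgdef]
    simp only [hi, Pi.add_apply, Pi.smul_apply, Pi.sub_apply, smul_eq_mul]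
    rw [Finset.sum_mul, add_assoc, ← Finset.sum_add_distrib]
    congr 1
    apply Finset.sum_congr rfl
    intro j _
    ring
  have hLs : ∀ i, |∑ j, a i j * (y j - x j)| ≤ L * dist x y := by
    intro i
    calc |∑ j, a i j * (y j - x j)| ≤ ∑ j, |a i j * (y j - x j)| :=
          Finset.abs_sum_le_sum_abs _ _
      _ ≤ ∑ j, |a i j| * dist x y := by
          apply Finset.sum_le_sum
          intro j _
          rw [abs_mul]
          apply mul_le_mul_of_nonneg_left _ (abs_nonneg _)
          rw [← Real.dist_eq]
          exact (dist_le_pi_dist y x j).trans (le_of_eq (dist_comm y x))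
      _ = (∑ j, |a i j|) * dist x y := by rw [Finset.sum_mul]
      _ ≤ L * dist x y := mul_le_mul_of_nonneg_right (hL i) dist_nonneg
  have := key2 (fun i => c i + ∑ j, a i j * x j) (fun i => ∑ j, a i j * (y j - x j))
    g 1 (L * dist x y) one_pos hg hcov hLs
  have hg1 : g 1 = f y := by rw [hgdef]; norm_num
  have hg0 : g 0 = f x := by rw [hgdef]; norm_num
  rw [hg1, hg0] at this
  exact this

/-- for a continuous piecewise linear `f` and fixed `v`, the
one-sided directional derivative `u ↦ ∂f(v)/∂u` exists and is continuous on the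
set of admissible unit directions at `v`. -/
theorem dirDeriv_continuous_in_direction {n : ℕ}
    (f : (Fin n → ℝ) → ℝ) (hfc : ContinuousOn f (cube n)) (hfPL : PL f)
    (v : Fin n → ℝ) (hv : v ∈ cube n) :
    ∃ D : (Fin n → ℝ) → ℝ,
      (∀ u ∈ Dirs v, Filter.Tendsto (fun ε : ℝ => (f (v + ε • u) - f v) / ε)
        (nhdsWithin 0 (Set.Ioi 0)) (nhds (D u))) ∧
      ContinuousOn D (Dirs v) := by
  obtain ⟨k, c, a, hpl⟩ := hfPL
  set L : ℝ := ∑ i, ∑ j, |a i j| with hLdef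
  have hL : ∀ i, ∑ j, |a i j| ≤ L := by
    intro i
    exact Finset.single_le_sum (f := fun i => ∑ j, |a i j|)
      (fun i _ => Finset.sum_nonneg fun j _ => abs_nonneg _) (Finset.mem_univ i)
  set D : (Fin n → ℝ) → ℝ := fun u =>
    limUnder (nhdsWithin (0:ℝ) (Set.Ioi 0)) (fun ε : ℝ => (f (v + ε • u) - f v) / ε)
    with hDdef
  -- the key convergence fact
  have hmain : ∀ u ∈ Dirs v, Filter.Tendsto (fun ε : ℝ => (f (v + ε • u) - f v) / ε)
      (nhdsWithin 0 (Set.Ioi 0)) (nhds (D u)) := by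
    intro u hu
    obtain ⟨-, ε₀, hε₀, hcube⟩ := hu
    have hmem : ∀ ε ∈ Set.Icc (0:ℝ) ε₀, v + ε • u ∈ cube n := by
      intro ε hε
      rcases eq_or_lt_of_le hε.1 with h | h
      · simpa [← h] using hv
      · exact hcube ε h hε.2
    set g : ℝ → ℝ := fun ε => f (v + ε • u) with hgdef
    have hg : ContinuousOn g (Set.Icc 0 ε₀) := by
      apply hfc.comp (by fun_prop)
      intro ε hε; exact hmem ε hε
    have hcov : ∀ ε ∈ Set.Icc (0:ℝ) ε₀, ∃ i,
        g ε = (c i + ∑ j, a i j * v j) + (∑ j, a i j * u j) * ε := by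
      intro ε hε
      obtain ⟨i, hi⟩ := hpl _ (hmem ε hε)
      refine ⟨i, ?_⟩
      rw [hgdef]
      simp only [hi, Pi.add_apply, Pi.smul_apply, smul_eq_mul]
      rw [Finset.sum_mul, add_assoc, ← Finset.sum_add_distrib]
      congr 1
      apply Finset.sum_congr rfl
      intro j _; ring
    obtain ⟨i, δ, hδpos, hδle, hδ⟩ := key _ _ g ε₀ hε₀ hg hcov
    have hg0 : g 0 = c i + ∑ j, a i j * v j := by
      have := hδ 0 ⟨le_refl _, hδpos.le⟩; simpa using this
    have hfv : f v = g 0 := by rw [hgdef]; norm_num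
    have htends : Filter.Tendsto (fun ε : ℝ => (f (v + ε • u) - f v) / ε)
        (nhdsWithin 0 (Set.Ioi 0)) (nhds (∑ j, a i j * u j)) := by
      apply Filter.Tendsto.congr' _ tendsto_const_nhds
      filter_upwards [Ioc_mem_nhdsGT_of_mem ⟨le_refl (0:ℝ), hδpos⟩] with ε hε
      have h1 : f (v + ε • u) = g ε := rfl
      rw [h1, hfv, hδ ε ⟨hε.1.le, hε.2⟩, hg0, add_sub_cancel_left,
        mul_div_assoc, div_self (ne_of_gt hε.1), mul_one]
    have hDu : D u = ∑ j, a i j * u j := htends.limUnder_eq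
    rw [hDu]; exact htends
  refine ⟨D, hmain, ?_⟩
  -- Lipschitz bound for D
  have hlip : ∀ u ∈ Dirs v, ∀ u' ∈ Dirs v, dist (D u) (D u') ≤ L * dist u u' := by
    intro u hu u' hu'
    obtain ⟨hu1, ε₀, hε₀, hcube⟩ := id hu
    obtain ⟨hu1', ε₀', hε₀', hcube'⟩ := id hu'
    have hb : ∀ᶠ ε in nhdsWithin (0:ℝ) (Set.Ioi 0),
        dist ((f (v + ε • u) - f v) / ε) ((f (v + ε • u') - f v) / ε) ≤ L * dist u u' := by
      filter_upwards [Ioc_mem_nhdsGT_of_mem ⟨le_refl (0:ℝ), lt_min hε₀ hε₀'⟩] with ε hε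
      have hεpos : 0 < ε := hε.1
      have h1 : v + ε • u ∈ cube n := hcube ε hεpos (le_trans hε.2 (min_le_left _ _))
      have h2 : v + ε • u' ∈ cube n := hcube' ε hεpos (le_trans hε.2 (min_le_right _ _))
      have hdistpt : dist (v + ε • u') (v + ε • u) = ε * dist u' u := by
        rw [dist_eq_norm, dist_eq_norm]
        have : v + ε • u' - (v + ε • u) = ε • (u' - u) := by
          funext j
          simp only [Pi.add_apply, Pi.sub_apply, Pi.smul_apply, smul_eq_mul]
          ring
        rw [this, norm_smul, Real.norm_eq_abs, abs_of_pos hεpos]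
      have hflip := f_lip f c a hfc hpl L hL (v + ε • u') (v + ε • u) h2 h1
      rw [Real.dist_eq, div_sub_div_same, abs_div, abs_of_pos hεpos, div_le_iff₀ hεpos]
      have : |f (v + ε • u) - f v - (f (v + ε • u') - f v)|
          = |f (v + ε • u) - f (v + ε • u')| := by ring_nf
      rw [this]
      calc |f (v + ε • u) - f (v + ε • u')| ≤ (L * dist (v + ε • u') (v + ε • u)) * 1 :=
            hflip
        _ = L * (ε * dist u' u) := by rw [hdistpt]; ring
        _ = L * dist u u' * ε := by rw [dist_comm]; ring
    have htd : Filter.Tendsto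
        (fun ε : ℝ => dist ((f (v + ε • u) - f v) / ε) ((f (v + ε • u') - f v) / ε))
        (nhdsWithin 0 (Set.Ioi 0)) (nhds (dist (D u) (D u'))) :=
      (hmain u hu).dist (hmain u' hu')
    exact le_of_tendsto htd hb
  have hL0 : 0 ≤ L := Finset.sum_nonneg fun i _ => Finset.sum_nonneg fun j _ => abs_nonneg _
  refine (LipschitzOnWith.of_dist_le_mul (K := L.toNNReal) (f := D) (s := Dirs v) ?_).continuousOn
  intro x hx y hy
  rw [Real.coe_toNNReal L hL0]
  exact hlip x hx y hy
end
end
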